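/- arXiv:2202.03178 — 4 statements merged into one kernel-verified Lean document; each statement's English description precedes it below -/
import Mathlib

section
/- For every integer n ≥ 2, the number of permutations f of Z_n such that the map i ↦ |f(i) − i| is a bijection from Z_n onto Z_n (i.e., the number of gracefully labeled functional directed graphs that are a spanning union of disjoint directed cycles) is a multiple of 4. -/
/-!
Inversion `f ↦ f⁻¹` and conjugation by the reversal `i ↦ n - 1 - i` are commuting involutions
preserving gracefulness: each reindexes the labels `|f i - i|` by a permutation `e` of `Fin n`.
The labelling of a graceful `f` is injective, so if one of the three non-trivial combinations
fixed `f`, then `e = 1`; this makes the reversal trivial or `f` the identity or the reversal,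
all impossible for `n ≥ 2`. Hence graceful permutations fall into orbits of size four.
-/

open Finset Function

section CommutingInvolutions

variable {X : Type*} [DecidableEq X] {a b : X → X}

def involutionOrbit (a b : X → X) (x : X) : Finset X := {x, a x, b x, a (b x)}

lemma apply_left_mem_involutionOrbit_iff (ha : Involutive a) {x y : X} :
    a y ∈ involutionOrbit a b x ↔ y ∈ involutionOrbit a b x := by
  simp only [involutionOrbit, mem_insert, mem_singleton, ha.eq_iff, ha _]
  tauto

lemma apply_right_mem_involutionOrbit_iff (hb : Involutive b) (hab : Function.Commute a b)
    {x y : X} :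
    b y ∈ involutionOrbit a b x ↔ y ∈ involutionOrbit a b x := by
  simp only [involutionOrbit, mem_insert, mem_singleton, hb.eq_iff, hab.eq, hb _]
  tauto

lemma card_involutionOrbit (ha : Involutive a) (hb : Involutive b) (hab : Function.Commute a b)
    {x : X} (hax : a x ≠ x) (hbx : b x ≠ x) (habx : a (b x) ≠ x) :
    #(involutionOrbit a b x) = 4 := by
  have h₁ : a x ≠ b x := fun h => habx (by rw [← h, ha])
  have h₂ : a x ≠ a (b x) := fun h => hbx (ha.injective h).symm
  have h₃ : b x ≠ a (b x) := fun h => by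
    rw [hab.eq, hb.injective.eq_iff] at h
    exact hax h.symm
  simp [involutionOrbit, card_insert_of_notMem, *, Ne.symm hax, Ne.symm hbx, Ne.symm habx]

theorem four_dvd_card_of_commute_involutive (ha : Involutive a) (hb : Involutive b)
    (hab : Function.Commute a b) (s : Finset X) (hs : ∀ x ∈ s, a x ∈ s ∧ b x ∈ s)
    (hfree : ∀ x ∈ s, a x ≠ x ∧ b x ≠ x ∧ a (b x) ≠ x) :
    4 ∣ #s := by
  induction s using Finset.strongInduction with
  | H s ih =>
  obtain rfl | ⟨x, hx⟩ := s.eq_empty_or_nonempty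
  · simp
  obtain ⟨hax, hbx, habx⟩ := hfree x hx
  have horbit : involutionOrbit a b x ⊆ s := by
    simp only [involutionOrbit, insert_subset_iff, singleton_subset_iff]
    exact ⟨hx, (hs x hx).1, (hs x hx).2, (hs _ (hs x hx).2).1⟩
  have hrest : 4 ∣ #(s \ involutionOrbit a b x) := by
    refine ih _ (sdiff_ssubset horbit ⟨x, by simp [involutionOrbit]⟩) (fun y hy => ?_)
      (fun y hy => hfree y (mem_sdiff.1 hy).1)
    rw [mem_sdiff] at hy
    simp only [mem_sdiff, apply_left_mem_involutionOrbit_iff ha,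
      apply_right_mem_involutionOrbit_iff hb hab]
    exact ⟨⟨(hs y hy.1).1, hy.2⟩, (hs y hy.1).2, hy.2⟩
  rw [← card_sdiff_add_card_eq_card horbit, card_involutionOrbit ha hb hab hax hbx habx]
  exact dvd_add hrest dvd_rfl

end CommutingInvolutions

namespace Equiv.Perm

variable {n : ℕ} {f : Perm (Fin n)}

def IsGraceful (f : Perm (Fin n)) : Prop :=
  univ.image (fun i => Nat.dist (f i) i) = range n

def revConj (f : Perm (Fin n)) : Perm (Fin n) := Fin.revPerm * f * Fin.revPerm

@[simp]
lemma revConj_apply (f : Perm (Fin n)) (i : Fin n) : revConj f i = (f i.rev).rev := rfl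

lemma revConj_involutive : Involutive (revConj : Perm (Fin n) → Perm (Fin n)) := fun f => by
  ext i
  simp

lemma revConj_mul_revPerm (f : Perm (Fin n)) : revConj f * Fin.revPerm = Fin.revPerm * f := by
  ext i
  simp

lemma inv_revConj (f : Perm (Fin n)) : (revConj f)⁻¹ = revConj f⁻¹ :=
  inv_eq_of_mul_eq_one_left (by ext i; simp)

lemma dist_inv_apply (f : Perm (Fin n)) (i : Fin n) :
    Nat.dist (f⁻¹ (f i)) (f i) = Nat.dist (f i) i := by
  simp [Nat.dist_comm]

lemma dist_revConj_apply (f : Perm (Fin n)) (i : Fin n) :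
    Nat.dist (revConj f (Fin.revPerm i)) (Fin.revPerm i) = Nat.dist (f i) i := by
  have := (f i).isLt
  simp only [revConj_apply, Fin.revPerm_apply, Fin.rev_rev, Fin.val_rev, Nat.dist]
  omega

lemma IsGraceful.dist_injective (hf : f.IsGraceful) : Injective fun i => Nat.dist (f i) i := by
  have hcard : #(univ.image fun i => Nat.dist (f i) i) = #(univ : Finset (Fin n)) := by
    rw [hf, card_range, card_univ, Fintype.card_fin]
  simpa using injOn_of_card_image_eq hcard

lemma IsGraceful.of_dist_apply_eq {g : Perm (Fin n)} (hf : f.IsGraceful) (e : Perm (Fin n))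
    (h : ∀ i, Nat.dist (g (e i)) (e i) = Nat.dist (f i) i) : g.IsGraceful := by
  rw [IsGraceful, ← image_univ_equiv e, image_image, ← hf]
  congr 1
  exact funext h

lemma IsGraceful.eq_one_of_dist_apply_eq (hf : f.IsGraceful) {e : Perm (Fin n)}
    (h : ∀ i, Nat.dist (f (e i)) (e i) = Nat.dist (f i) i) : e = 1 :=
  ext fun i => hf.dist_injective (h i)

lemma IsGraceful.inv (hf : f.IsGraceful) : f⁻¹.IsGraceful :=
  hf.of_dist_apply_eq f (dist_inv_apply f)

lemma IsGraceful.revConj (hf : f.IsGraceful) : (revConj f).IsGraceful :=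
  hf.of_dist_apply_eq Fin.revPerm (dist_revConj_apply f)

lemma not_isGraceful_one (hn : 2 ≤ n) : ¬ (1 : Perm (Fin n)).IsGraceful := fun h =>
  absurd (congrArg Fin.val (h.dist_injective (a₁ := ⟨0, by omega⟩) (a₂ := ⟨1, by omega⟩)
    (by simp))) (by simp)

lemma not_isGraceful_revPerm (hn : 2 ≤ n) : ¬ (Fin.revPerm : Perm (Fin n)).IsGraceful := by
  intro h
  have := h.dist_injective (a₁ := ⟨0, by omega⟩) (a₂ := ⟨n - 1, by omega⟩)
    (by simp [Nat.dist]; omega)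
  simp only [Fin.mk.injEq] at this
  omega

lemma revPerm_ne_one (hn : 2 ≤ n) : (Fin.revPerm : Perm (Fin n)) ≠ 1 := fun h => by
  have := congrArg Fin.val (Equiv.ext_iff.1 h ⟨0, by omega⟩)
  simp only [Fin.revPerm_apply, Fin.val_rev, zero_add, coe_one, id_eq] at this
  omega

lemma IsGraceful.inv_ne_self (hn : 2 ≤ n) (hf : f.IsGraceful) : f⁻¹ ≠ f := fun h => by
  have hf1 : f = 1 := hf.eq_one_of_dist_apply_eq (by simpa only [h] using dist_inv_apply f)
  exact not_isGraceful_one hn (hf1 ▸ hf)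

lemma IsGraceful.revConj_ne_self (hn : 2 ≤ n) (hf : f.IsGraceful) : f.revConj ≠ f := fun h =>
  revPerm_ne_one hn <| hf.eq_one_of_dist_apply_eq (by simpa only [h] using dist_revConj_apply f)

lemma IsGraceful.inv_revConj_ne_self (hn : 2 ≤ n) (hf : f.IsGraceful) : f.revConj⁻¹ ≠ f := by
  intro h
  have hrf : Fin.revPerm * f = 1 := by
    rw [← revConj_mul_revPerm]
    refine hf.eq_one_of_dist_apply_eq fun i => ?_
    simpa only [h, mul_apply] using (dist_inv_apply _ _).trans (dist_revConj_apply f i)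
  have hfr : f = Fin.revPerm := by
    rw [eq_inv_of_mul_eq_one_right hrf, inv_def, Fin.revPerm_symm]
  exact not_isGraceful_revPerm hn (hfr ▸ hf)

end Equiv.Perm

/-- For `n ≥ 2`, the number of permutations `f` of `Z_n` such that
`i ↦ |f(i) − i|` is a bijection of `Z_n` (i.e. the number of gracefully labeled functional
directed graphs which are a spanning union of disjoint directed cycles) is a multiple
of `4`. -/
theorem stmt_6 (n : ℕ) (hn : 2 ≤ n) :
    4 ∣ Nat.card {f : Equiv.Perm (Fin n) //
      Finset.image (fun i => Nat.dist (f i).val i.val) Finset.univ = Finset.range n} := by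
  rw [Nat.card_eq_fintype_card, Fintype.card_subtype]
  refine four_dvd_card_of_commute_involutive inv_involutive Equiv.Perm.revConj_involutive
    Equiv.Perm.inv_revConj _ (fun f hf => ?_) (fun f hf => ?_) <;>
    replace hf : f.IsGraceful := (mem_filter.1 hf).2
  · simp only [mem_filter, mem_univ, true_and]
    exact ⟨hf.inv, hf.revConj⟩
  · exact ⟨hf.inv_ne_self hn, hf.revConj_ne_self hn, hf.inv_revConj_ne_self hn⟩
end

section
/- For every integer n > 2, the number of permutations γ of Z_n with γ(0) = 0 such that for every i ∈ Z_n \ {0} either γ(i) ≤ i or γ(i) ≤ (n−1) − i (i.e., the number of distinct permutation bases fixing 0 for graceful expansions of members of Z_n^{Z_n}) equals (⌊(n−1)/2⌋)! · (⌈(n−1)/2⌉)!. -/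
/-!
Since `γ 0 = 0`, the condition reads `γ i ≤ b i` for all `i`, where `b 0 = 0` and
`b i = max i (n - 1 - i)` otherwise. Place the values `v = n - 1, …, 1, 0` in decreasing order:
the positions admissible for `v` form a family growing as `v` decreases, and `n - 1 - v` of them
are already taken by the larger values. This leaves `v` choices for `1 ≤ v ≤ ⌊(n - 1)/2⌋`,
`n - v` choices above, and one for `v = 0`.
-/

open Finset
open scoped Nat

section NestedInjections

variable {β : Type*} [DecidableEq β] [Fintype β]

def injectiveMemSnocEquiv (k : ℕ) (S : ℕ → Finset β) :
    {f : Fin (k + 1) → β // Function.Injective f ∧ ∀ i : Fin (k + 1), f i ∈ S i} ≃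
      Σ x : S k, {g : Fin k → β // Function.Injective g ∧ ∀ i : Fin k, g i ∈ (S i).erase x} where
  toFun f := ⟨⟨f.1 (Fin.last k), f.2.2 _⟩, Fin.init f.1, f.2.1.comp (Fin.castSucc_injective k),
    fun i => mem_erase.2 ⟨f.2.1.ne (Fin.castSucc_lt_last i).ne, f.2.2 i.castSucc⟩⟩
  invFun p := ⟨Fin.snoc p.2.1 p.1.1,
    Fin.snoc_injective_iff.2 ⟨p.2.2.1, by rintro ⟨i, hi⟩; exact (mem_erase.1 (p.2.2.2 i)).1 hi⟩,
    Fin.lastCases (by simp)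
      (fun i => by simpa using mem_of_mem_erase (p.2.2.2 i))⟩
  left_inv f := Subtype.ext (Fin.snoc_init_self f.1)
  right_inv p := Sigma.subtype_ext (Subtype.ext (by simp)) (by simp)

/-- A factor truncated to `0` means `S i` is too small, and then there is indeed no such `f`. -/
theorem card_injective_mem_of_antitone (k : ℕ) (S : ℕ → Finset β) (hS : Antitone S) :
    Fintype.card {f : Fin k → β // Function.Injective f ∧ ∀ i : Fin k, f i ∈ S i} =
      ∏ i ∈ range k, (#(S i) - (k - 1 - i)) := by
  induction k generalizing S with
  | zero => simp [Function.injective_of_subsingleton]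
  | succ k ih =>
    rw [Fintype.card_congr (injectiveMemSnocEquiv k S), Fintype.card_sigma, prod_range_succ,
      Nat.add_sub_cancel, Nat.sub_self, Nat.sub_zero]
    have hx (x : S k) : Fintype.card
        {g : Fin k → β // Function.Injective g ∧ ∀ i : Fin k, g i ∈ (S i).erase x} =
          ∏ i ∈ range k, (#(S i) - (k - i)) := by
      rw [ih _ fun i j hij => erase_subset_erase _ (hS hij)]
      refine prod_congr rfl fun i hi => ?_
      have hik := mem_range.1 hi
      rw [card_erase_of_mem (hS hik.le x.2)]
      omega
    simp only [hx, sum_const, card_univ, Fintype.card_coe, smul_eq_mul, mul_comm]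

end NestedInjections

theorem card_perm_val_apply_le (n : ℕ) (b : Fin n → ℕ) :
    Fintype.card {γ : Equiv.Perm (Fin n) // ∀ i, (γ i : ℕ) ≤ b i} =
      ∏ v ∈ range n, (#{i | v ≤ b i} - (n - 1 - v)) := by
  let S : ℕ → Finset (Fin n) := fun v => {i | v ≤ b i}
  have hS : Antitone S := fun v w hvw i hi => by simp only [S, mem_filter_univ] at hi ⊢; omega
  rw [← card_injective_mem_of_antitone n S hS]
  refine Fintype.card_congr
    { toFun γ := ⟨γ.1.symm, γ.1.symm.injective, fun v => ?_⟩
      invFun f := ⟨(Equiv.ofBijective f.1 (Finite.injective_iff_bijective.1 f.2.1)).symm,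
        fun i => ?_⟩
      left_inv γ := ?_
      right_inv f := ?_ }
  · simpa [S] using γ.2 (γ.1.symm v)
  · simpa [S, Equiv.ofBijective_apply_symm_apply] using
      f.2.2 ((Equiv.ofBijective _ (Finite.injective_iff_bijective.1 f.2.1)).symm i)
  · exact Subtype.ext (Equiv.ext fun i => by simp)
  · exact Subtype.ext (funext fun v => by simp)

theorem card_filter_fin_eq_card_filter_range (n : ℕ) (p : ℕ → Prop) [DecidablePred p] :
    #{i : Fin n | p i} = #{i ∈ range n | p i} := by
  rw [← card_map Fin.valEmbedding]
  congr 1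
  ext m
  simp [Fin.exists_iff, and_comm]

def gracefulBound (n i : ℕ) : ℕ := if i = 0 then 0 else max i (n - 1 - i)

theorem forall_val_le_gracefulBound_iff {n : ℕ} (hn : 0 < n) (f : Fin n → Fin n) :
    (∀ i, (f i : ℕ) ≤ gracefulBound n i) ↔
      f ⟨0, hn⟩ = ⟨0, hn⟩ ∧
        ∀ i : Fin n, i ≠ ⟨0, hn⟩ → ((f i).val ≤ i.val ∨ (f i).val ≤ (n - 1) - i.val) := by
  constructor
  · intro h
    refine ⟨Fin.ext (by simpa [gracefulBound] using h ⟨0, hn⟩), fun i hi => ?_⟩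
    have hi' : (i : ℕ) ≠ 0 := fun h => hi (Fin.ext h)
    simpa [gracefulBound, hi'] using h i
  · rintro ⟨h0, h⟩ i
    by_cases hi : i = ⟨0, hn⟩
    · simp [hi, h0, gracefulBound]
    · have hi' : (i : ℕ) ≠ 0 := fun h => hi (Fin.ext h)
      simpa [gracefulBound, hi'] using h i hi

theorem card_filter_le_gracefulBound_sub {n v : ℕ} (hv : v < n) :
    #{i : Fin n | v ≤ gracefulBound n i} - (n - 1 - v) =
      if v = 0 then 1 else if 2 * v < n then v else n - v := by
  rw [card_filter_fin_eq_card_filter_range n (v ≤ gracefulBound n ·)]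
  split_ifs with h0 h2
  · rw [h0, filter_true_of_mem fun _ _ => Nat.zero_le _, card_range]
    omega
  · have : {i ∈ range n | v ≤ gracefulBound n i} = Icc 1 (n - 1) := by
      ext i
      rw [mem_filter, mem_range, mem_Icc, gracefulBound]
      split_ifs <;> omega
    rw [this, Nat.card_Icc]
    omega
  · have : {i ∈ range n | v ≤ gracefulBound n i} = Icc 1 (n - 1 - v) ∪ Icc v (n - 1) := by
      ext i
      rw [mem_filter, mem_range, mem_union, mem_Icc, mem_Icc, gracefulBound]
      split_ifs <;> omega
    have hdisj : Disjoint (Icc 1 (n - 1 - v)) (Icc v (n - 1)) :=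
      disjoint_left.2 fun i hi hi' => by simp only [mem_Icc] at hi hi'; omega
    rw [this, card_union_of_disjoint hdisj, Nat.card_Icc, Nat.card_Icc]
    omega

theorem prod_range_graceful_factor (n : ℕ) :
    ∏ v ∈ range n, (if v = 0 then 1 else if 2 * v < n then v else n - v) =
      ((n - 1) / 2)! * (n / 2)! := by
  rcases n with _ | m
  · simp
  rw [prod_range_succ', ← prod_range_mul_prod_Ico _ (Nat.div_le_self m 2), if_pos rfl, mul_one,
    Nat.add_sub_cancel]
  congr 1
  · rw [← prod_range_add_one_eq_factorial]
    refine prod_congr rfl fun v hv => ?_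
    have := mem_range.1 hv
    rw [if_neg (by omega), if_pos (by omega)]
  · rw [prod_Ico_eq_prod_range, ← Nat.descFactorial_self, Nat.descFactorial_eq_prod_range,
      show m - m / 2 = (m + 1) / 2 by omega]
    refine prod_congr rfl fun k hk => ?_
    have := mem_range.1 hk
    rw [if_neg (by omega), if_neg (by omega)]
    omega

/-- For `n > 2`, the number of permutations `γ` of `Z_n` fixing `0` such
that every `i ≠ 0` satisfies `γ(i) ≤ i` or `γ(i) ≤ (n−1) − i` (i.e. the number of distinct
permutation bases fixing `0` for graceful expansions of members of `Z_n^{Z_n}`) equals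
`⌊(n−1)/2⌋! · ⌈(n−1)/2⌉!` (note `⌈(n−1)/2⌉ = n/2` in natural division). -/
theorem stmt_8 (n : ℕ) (hn : 2 < n) :
    Nat.card {γ : Equiv.Perm (Fin n) //
      γ ⟨0, by omega⟩ = ⟨0, by omega⟩ ∧
      ∀ i : Fin n, i ≠ ⟨0, by omega⟩ →
        ((γ i).val ≤ i.val ∨ (γ i).val ≤ (n - 1) - i.val)} =
    Nat.factorial ((n - 1) / 2) * Nat.factorial (n / 2) := by
  rw [Nat.card_congr (Equiv.subtypeEquivRight fun γ : Equiv.Perm (Fin n) =>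
      (forall_val_le_gracefulBound_iff (by omega) γ).symm),
    Nat.card_eq_fintype_card, card_perm_val_apply_le,
    prod_congr rfl fun v hv => card_filter_le_gracefulBound_sub (mem_range.1 hv),
    prod_range_graceful_factor]
end

section
/- Let n > 0 and let γ be a permutation of Z_n with γ(0) = 0. Then the number of functions f : Z_n → Z_n satisfying |f(i) − i| = γ(i) for all i ∈ Z_n (all of which have gracefully labeled graphs G_f) is at most 2^{⌈(n−1)/2⌉}. Moreover, for γ = id this number equals exactly 2^{⌊(n−1)/2⌋}, so the bound is attained by γ = id whenever n is odd. -/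
/-!
Vertex `i` with prescribed distance `d = γ i` can only go to `i + d` or `i - d`, and both are
in range only when `0 < d` and `2 * d < n`. As `γ` is a bijection, exactly `⌊(n - 1) / 2⌋`
labels `d` satisfy this, whence the count is a product of at most that many factors `2`. For
`γ = id` vertex `i` has exactly the images `0` and `2 * i`, so every such label contributes a
factor `2`.
-/

open Finset

def branching (n d : ℕ) : ℕ := if 0 < d ∧ 2 * d < n then 2 else 1

lemma card_subtype_forall_eq_prod {ι α : Type*} [Fintype ι] (p : ι → α → Prop) :
    Nat.card {f : ι → α // ∀ i, p i (f i)} = ∏ i, Nat.card {x : α // p i x} := by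
  rw [Nat.card_congr Equiv.subtypePiEquivPi, Nat.card_pi]

lemma card_dist_eq_le_branching {n : ℕ} (i : Fin n) (d : ℕ) :
    Nat.card {x : Fin n // Nat.dist x i = d} ≤ branching n d := by
  classical
  have hi := i.isLt
  rw [Nat.card_eq_fintype_card, Fintype.card_subtype, branching]
  split_ifs with h
  · calc #{x : Fin n | Nat.dist x i = d} ≤ #({i + d, i - d} : Finset ℕ) := by
          refine card_le_card_of_injOn Fin.val (fun x hx => ?_) Fin.val_injective.injOn
          rw [coe_filter, Set.mem_ofPred_eq] at hx
          unfold Nat.dist at hx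
          rw [coe_insert, coe_singleton, Set.mem_insert_iff, Set.mem_singleton_iff]
          omega
      _ ≤ 2 := card_le_two
  · refine card_le_one.mpr fun x hx y hy => Fin.ext ?_
    simp only [mem_filter, mem_univ, true_and] at hx hy
    unfold Nat.dist at hx hy
    have := x.isLt; have := y.isLt
    omega

lemma card_dist_eq_self {n : ℕ} (i : Fin n) :
    Nat.card {x : Fin n // Nat.dist x i = i} = branching n i := by
  classical
  have hi := i.isLt
  rw [Nat.card_eq_fintype_card, Fintype.card_subtype, branching]
  split_ifs with h
  · have : ({x : Fin n | Nat.dist x i = i} : Finset (Fin n)) =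
        {⟨0, by omega⟩, ⟨2 * i, by omega⟩} := by
      ext x
      simp only [mem_filter, mem_univ, true_and, mem_insert, mem_singleton, Fin.ext_iff]
      unfold Nat.dist
      omega
    rw [this, card_pair (by simp only [ne_eq, Fin.ext_iff]; omega)]
  · have : ({x : Fin n | Nat.dist x i = i} : Finset (Fin n)) = {⟨0, by omega⟩} := by
      ext x
      have := x.isLt
      simp only [mem_filter, mem_univ, true_and, mem_singleton, Fin.ext_iff]
      unfold Nat.dist
      omega
    rw [this, card_singleton]

lemma prod_branching (n : ℕ) : ∏ d : Fin n, branching n d = 2 ^ ((n - 1) / 2) := by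
  classical
  have hfilter : (range n).filter (fun d => 0 < d ∧ 2 * d < n) = Icc 1 ((n - 1) / 2) := by
    ext d
    simp only [mem_filter, mem_range, mem_Icc]
    omega
  rw [Fin.prod_univ_eq_prod_range (branching n)]
  unfold branching
  rw [prod_ite, prod_const, prod_const, one_pow, mul_one, hfilter, Nat.card_Icc,
    Nat.add_sub_cancel]

lemma card_fun_dist_eq_perm_le {n : ℕ} (γ : Equiv.Perm (Fin n)) :
    Nat.card {f : Fin n → Fin n // ∀ i, Nat.dist (f i) i = γ i} ≤ 2 ^ ((n - 1) / 2) := by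
  rw [card_subtype_forall_eq_prod fun (i x : Fin n) => Nat.dist x i = γ i,
    ← prod_branching n]
  calc ∏ i : Fin n, Nat.card {x : Fin n // Nat.dist x i = γ i}
      ≤ ∏ i : Fin n, branching n (γ i) := prod_le_prod' fun i _ => card_dist_eq_le_branching i _
    _ = ∏ d : Fin n, branching n d := Equiv.prod_comp γ fun d => branching n d

lemma card_fun_dist_eq_self (n : ℕ) :
    Nat.card {f : Fin n → Fin n // ∀ i, Nat.dist (f i) i = i} = 2 ^ ((n - 1) / 2) := by
  rw [card_subtype_forall_eq_prod fun (i x : Fin n) => Nat.dist x i = i, ← prod_branching n]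
  exact prod_congr rfl fun i _ => card_dist_eq_self i

theorem stmt_9_general (n : ℕ) (γ : Equiv.Perm (Fin n)) :
    Nat.card {f : Fin n → Fin n // ∀ i, Nat.dist (f i).val i.val = (γ i).val} ≤ 2 ^ (n / 2) ∧
    (γ = Equiv.refl (Fin n) →
      Nat.card {f : Fin n → Fin n // ∀ i, Nat.dist (f i).val i.val = (γ i).val} =
        2 ^ ((n - 1) / 2)) := by
  refine ⟨(card_fun_dist_eq_perm_le γ).trans <| Nat.pow_le_pow_right two_pos (by omega), ?_⟩
  rintro rfl
  exact card_fun_dist_eq_self n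

/-- Let `γ` be a permutation of `Z_n` with `γ(0) = 0`. The number of
functions `f : Z_n → Z_n` with `|f(i) − i| = γ(i)` for all `i` (all of which have gracefully
labeled graphs) is at most `2^{⌈(n−1)/2⌉}` (note `⌈(n−1)/2⌉ = n/2` in natural division);
moreover for `γ = id` this number equals exactly `2^{⌊(n−1)/2⌋}`. -/
theorem stmt_9 (n : ℕ) (hn : 0 < n) (γ : Equiv.Perm (Fin n))
    (h0 : γ ⟨0, hn⟩ = ⟨0, hn⟩) :
    Nat.card {f : Fin n → Fin n // ∀ i, Nat.dist (f i).val i.val = (γ i).val} ≤ 2 ^ (n / 2) ∧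
    (γ = Equiv.refl (Fin n) →
      Nat.card {f : Fin n → Fin n // ∀ i, Nat.dist (f i).val i.val = (γ i).val} =
        2 ^ ((n - 1) / 2)) :=
  stmt_9_general n γ
end

section
/- For every n > 0 and every f : Z_n → Z_n, 1 ≤ min over permutations σ of Z_n of |{ |σfσ⁻¹(i) − i| : i ∈ Z_n }| ≤ 1 + ρ_f + ε_f, where ρ_f is the minimum number of non-loop directed edges whose deletion from G_f leaves a spanning subgraph whose non-loop edges, viewed as undirected edges, form a disjoint union of paths on the vertex set Z_n (loop edges being permitted to remain), and ε_f = 1 if f has a fixed point and ε_f = 0 otherwise. -/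
/-- The undirected simple graph on `Z_n` formed by the non-loop edges `{i, f(i)}` of the
functional directed graph `G_f` that survive the deletion of the edges indexed by `D`. -/
def remGraph {n : ℕ} (f : Fin n → Fin n) (D : Finset (Fin n)) : SimpleGraph (Fin n) where
  Adj a b := a ≠ b ∧ ∃ i, i ∉ D ∧ f i ≠ i ∧ s(i, f i) = s(a, b)
  symm := by
    constructor
    rintro a b ⟨hab, i, hiD, hif, he⟩
    exact ⟨hab.symm, i, hiD, hif, he.trans Sym2.eq_swap⟩
  loopless := ⟨fun a h => h.1 rfl⟩

/-- `rhoF f` is the minimum number of non-loop directed edges whose deletion from `G_f`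
leaves a spanning subgraph whose non-loop edges, viewed as undirected edges, form a
disjoint union of paths (a linear forest: acyclic with all degrees at most `2`) on `Z_n`,
loop edges being permitted to remain. -/
noncomputable def rhoF {n : ℕ} (f : Fin n → Fin n) : ℕ :=
  sInf {k : ℕ | ∃ D : Finset (Fin n), D.card = k ∧ (∀ i ∈ D, f i ≠ i) ∧
    (remGraph f D).IsAcyclic ∧ ∀ v, ((remGraph f D).neighborSet v).ncard ≤ 2}

/-! A set `D` of `rhoF f` deleted edges leaves a linear forest, and a linear forest is a spanning
subgraph of a path: every finite acyclic graph has a vertex with at most one neighbour (an end of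
a longest path), and ordering the rest with that neighbour first lines all vertices up so that
adjacent vertices get consecutive positions. Conjugating `f` by this ordering, every surviving
non-loop edge has length `1`, every loop length `0`, and the edges of `D` add at most `#D` further
lengths. -/

open Finset

namespace SimpleGraph

variable {V : Type*} {G : SimpleGraph V}

theorem IsAcyclic.exists_ncard_neighborSet_le_one [Finite V] [Nonempty V] (hG : G.IsAcyclic) :
    ∃ v, (G.neighborSet v).ncard ≤ 1 := by
  obtain ⟨u, v, p, hp, hmax⟩ := Walk.exists_isPath_forall_isPath_length_le_length G
  have hsnd : ∀ w, G.Adj u w → w = p.snd := fun w hadj =>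
    hG.eq_snd_of_adj_start hp hadj <| by
      by_contra hw
      have := hmax _ _ _ (hp.cons hw (h := hadj.symm))
      simp at this
  exact ⟨u, (Set.ncard_le_one (Set.toFinite _)).2 fun a ha b hb =>
    (hsnd a ha).trans (hsnd b hb).symm⟩

theorem IsAcyclic.exists_mem_ncard_neighborSet_inter_le_one (hG : G.IsAcyclic) {s : Set V}
    (hs : s.Finite) (hne : s.Nonempty) : ∃ w ∈ s, (G.neighborSet w ∩ s).ncard ≤ 1 := by
  have := hs.to_subtype
  have := hne.to_subtype
  obtain ⟨⟨w, hw⟩, hdeg⟩ := (hG.induce s).exists_ncard_neighborSet_le_one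
  refine ⟨w, hw, ?_⟩
  have himage : G.neighborSet w ∩ s = Subtype.val '' (G.induce s).neighborSet ⟨w, hw⟩ := by
    ext x
    simp [and_comm]
  rwa [himage, Set.ncard_image_of_injective _ Subtype.val_injective]

structure IsPathOrdering (G : SimpleGraph V) (s : Finset V) (pos : V → ℕ) : Prop where
  injOn : Set.InjOn pos s
  lt_card : ∀ v ∈ s, pos v < #s
  adj : ∀ a ∈ s, ∀ b ∈ s, G.Adj a b → pos a + 1 = pos b ∨ pos b + 1 = pos a

theorem isPathOrdering_empty (pos : V → ℕ) : G.IsPathOrdering ∅ pos :=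
  ⟨by simp, by simp, by simp⟩

theorem IsPathOrdering.cons [DecidableEq V] {s : Finset V} {w : V} {pos : V → ℕ}
    (h : G.IsPathOrdering (s.erase w) pos) (hw : w ∈ s)
    (hnbr : ∀ u ∈ s, G.Adj w u → pos u = 0) :
    G.IsPathOrdering s (fun v => if v = w then 0 else pos v + 1) where
  injOn a ha b hb hab := by
    dsimp only at hab
    split_ifs at hab with haw hbw hbw
    · exact haw.trans hbw.symm
    · exact h.injOn (mem_erase.2 ⟨haw, ha⟩) (mem_erase.2 ⟨hbw, hb⟩) (by omega)
  lt_card v hv := by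
    have := card_erase_add_one hw
    by_cases hvw : v = w
    · simp only [hvw, if_true]; omega
    · simp only [hvw, if_false]
      have := h.lt_card v (mem_erase.2 ⟨hvw, hv⟩)
      omega
  adj a ha b hb hab := by
    by_cases haw : a = w <;> by_cases hbw : b = w <;> simp only [haw, hbw, if_true, if_false]
    · exact absurd (haw ▸ hbw ▸ hab) G.irrefl
    · simp [hnbr b hb (haw ▸ hab)]
    · simp [hnbr a ha (hbw ▸ hab.symm)]
    · simpa using h.adj a (mem_erase.2 ⟨haw, ha⟩) b (mem_erase.2 ⟨hbw, hb⟩) hab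

section LinearForest

variable [Finite V] [DecidableEq V]

theorem exists_isPathOrdering_apply_eq_zero (hG : G.IsAcyclic)
    (hdeg : ∀ v, (G.neighborSet v).ncard ≤ 2) (s : Finset V) :
    ∀ w ∈ s, (G.neighborSet w ∩ s).ncard ≤ 1 → ∃ pos, G.IsPathOrdering s pos ∧ pos w = 0 := by
  induction s using Finset.strongInduction with
  | H s ih =>
  intro w hw hleaf
  have hsub : s.erase w ⊂ s := erase_ssubset hw
  by_cases hnbr : ∃ u ∈ s, G.Adj w u
  · obtain ⟨u, hu, hwu⟩ := hnbr
    -- `u` loses its neighbour `w`, so it becomes an end of `s.erase w`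
    have huleaf : (G.neighborSet u ∩ ↑(s.erase w)).ncard ≤ 1 := by
      have hle : G.neighborSet u ∩ ↑(s.erase w) ⊆ G.neighborSet u \ {w} := by
        intro x hx
        exact ⟨hx.1, fun hxw => (mem_erase.1 hx.2).1 hxw⟩
      have := Set.ncard_sdiff_singleton_of_mem (show w ∈ G.neighborSet u from hwu.symm)
      have := Set.ncard_le_ncard hle
      have := hdeg u
      omega
    obtain ⟨pos, hpos, hu0⟩ := ih _ hsub u (mem_erase.2 ⟨hwu.ne', hu⟩) huleaf
    refine ⟨_, hpos.cons hw fun u' hu' hwu' => ?_, if_pos rfl⟩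
    rwa [(Set.ncard_le_one (Set.toFinite _)).1 hleaf u' ⟨hwu', hu'⟩ u ⟨hwu, hu⟩]
  · obtain ⟨pos, hpos⟩ : ∃ pos, G.IsPathOrdering (s.erase w) pos := by
      rcases (s.erase w).eq_empty_or_nonempty with hempty | hne
      · exact ⟨fun _ => 0, hempty ▸ isPathOrdering_empty _⟩
      · obtain ⟨u, hu, huleaf⟩ :=
          hG.exists_mem_ncard_neighborSet_inter_le_one (s.erase w).finite_toSet hne
        exact (ih _ hsub u hu huleaf).imp fun _ => And.left
    exact ⟨_, hpos.cons hw fun u hu hwu => absurd ⟨u, hu, hwu⟩ hnbr, if_pos rfl⟩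

theorem exists_isPathOrdering (hG : G.IsAcyclic) (hdeg : ∀ v, (G.neighborSet v).ncard ≤ 2)
    (s : Finset V) : ∃ pos, G.IsPathOrdering s pos := by
  rcases s.eq_empty_or_nonempty with rfl | hne
  · exact ⟨fun _ => 0, isPathOrdering_empty _⟩
  · obtain ⟨w, hw, hleaf⟩ := hG.exists_mem_ncard_neighborSet_inter_le_one s.finite_toSet hne
    exact (exists_isPathOrdering_apply_eq_zero hG hdeg s w hw hleaf).imp
      fun _ => And.left

end LinearForest

theorem IsAcyclic.exists_equiv_fin_adj_pathGraph [Fintype V] (hG : G.IsAcyclic)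
    (hdeg : ∀ v, (G.neighborSet v).ncard ≤ 2) :
    ∃ e : V ≃ Fin (Fintype.card V), ∀ ⦃a b⦄, G.Adj a b → (pathGraph _).Adj (e a) (e b) := by
  classical
  obtain ⟨pos, hpos⟩ := exists_isPathOrdering hG hdeg univ
  let e : V → Fin (Fintype.card V) :=
    fun v => ⟨pos v, card_univ (α := V) ▸ hpos.lt_card v (mem_univ v)⟩
  have he : e.Bijective := (Fintype.bijective_iff_injective_and_card e).2
    ⟨fun a b hab => hpos.injOn (by simp) (by simp) (congrArg Fin.val hab), by simp⟩
  exact ⟨.ofBijective e he, fun a b hab =>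
    pathGraph_adj.2 (hpos.adj a (mem_univ a) b (mem_univ b) hab)⟩

end SimpleGraph

theorem rhoF_spec {n : ℕ} (f : Fin n → Fin n) :
    ∃ D : Finset (Fin n), D.card = rhoF f ∧ (∀ i ∈ D, f i ≠ i) ∧
      (remGraph f D).IsAcyclic ∧ ∀ v, ((remGraph f D).neighborSet v).ncard ≤ 2 := by
  let D := univ.filter fun i => f i ≠ i
  have hbot : remGraph f D = ⊥ := by
    ext a b
    simp only [SimpleGraph.bot_adj, iff_false]
    rintro ⟨-, i, hiD, hif, -⟩
    exact hiD (mem_filter.2 ⟨mem_univ i, hif⟩)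
  refine Nat.sInf_mem (s := {k | ∃ D : Finset (Fin n), D.card = k ∧ (∀ i ∈ D, f i ≠ i) ∧
    (remGraph f D).IsAcyclic ∧ ∀ v, ((remGraph f D).neighborSet v).ncard ≤ 2}) ?_
  refine ⟨D.card, D, rfl, fun i hi => (mem_filter.1 hi).2, ?_, fun v => ?_⟩
  · rw [hbot]
    exact SimpleGraph.isAcyclic_bot
  · simp [hbot]

theorem card_image_dist_le {α : Type*} [Fintype α] [DecidableEq α] (f : α → α) (p : α → ℕ)
    (D : Finset α) [Decidable (∃ i, f i = i)]
    (hp : ∀ v ∉ D, f v ≠ v → Nat.dist (p (f v)) (p v) = 1) :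
    (univ.image fun v => Nat.dist (p (f v)) (p v)).card ≤
      1 + D.card + if ∃ i, f i = i then 1 else 0 := by
  set d := fun v => Nat.dist (p (f v)) (p v)
  set F := univ.filter fun v => f v = v
  have hcover : univ.image d ⊆ insert 1 (D.image d ∪ F.image d) := by
    intro x hx
    obtain ⟨v, -, rfl⟩ := mem_image.1 hx
    by_cases hv : v ∈ D
    · exact mem_insert_of_mem (mem_union_left _ (mem_image_of_mem d hv))
    by_cases hfix : f v = v
    · exact mem_insert_of_mem (mem_union_right _
        (mem_image_of_mem d (mem_filter.2 ⟨mem_univ v, hfix⟩)))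
    · rw [show d v = 1 from hp v hv hfix]
      exact mem_insert_self _ _
  have hF : (F.image d).card ≤ if ∃ i, f i = i then 1 else 0 := by
    split_ifs with hfix
    · have hzero : F.image d ⊆ {0} := by
        intro x hx
        obtain ⟨v, hv, rfl⟩ := mem_image.1 hx
        simp [d, (mem_filter.1 hv).2]
      exact (card_le_card hzero).trans (card_singleton 0).le
    · simp_all [F]
  calc (univ.image d).card ≤ (insert 1 (D.image d ∪ F.image d)).card :=
        card_le_card hcover
    _ ≤ 1 + ((D.image d).card + (F.image d).card) := by
        rw [add_comm 1]
        exact (card_insert_le _ _).trans (by gcongr; exact card_union_le _ _)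
    _ ≤ 1 + D.card + if ∃ i, f i = i then 1 else 0 := by
        have := card_image_le (s := D) (f := d)
        omega

/-- For every `n > 0` and `f : Z_n → Z_n`,
`1 ≤ min_σ |{ |σfσ⁻¹(i) − i| : i ∈ Z_n }| ≤ 1 + ρ_f + ε_f`, where `ε_f = 1` iff `f` has a
fixed point. -/
theorem stmt_15 (n : ℕ) (hn : 0 < n) (f : Fin n → Fin n) :
    1 ≤ Finset.univ.inf' ⟨1, Finset.mem_univ 1⟩ (fun σ : Equiv.Perm (Fin n) =>
        (Finset.image (fun i => Nat.dist (σ (f (σ.symm i))).val i.val) Finset.univ).card) ∧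
    Finset.univ.inf' ⟨1, Finset.mem_univ 1⟩ (fun σ : Equiv.Perm (Fin n) =>
        (Finset.image (fun i => Nat.dist (σ (f (σ.symm i))).val i.val) Finset.univ).card) ≤
      1 + rhoF f + (if ∃ i, f i = i then 1 else 0) := by
  refine ⟨le_inf' _ _ fun σ _ => ?_, ?_⟩
  · have : Nonempty (Fin n) := ⟨⟨0, hn⟩⟩
    exact card_pos.2 (univ_nonempty.image _)
  obtain ⟨D, hDcard, -, hDacyclic, hDdeg⟩ := rhoF_spec f
  obtain ⟨e, he⟩ := hDacyclic.exists_equiv_fin_adj_pathGraph hDdeg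
  let σ : Equiv.Perm (Fin n) := e.trans (finCongr (Fintype.card_fin n))
  have hσ : ∀ v ∉ D, f v ≠ v → Nat.dist (σ (f v)).val (σ v).val = 1 := fun v hv hfix => by
    have := SimpleGraph.pathGraph_adj.1 (he ⟨fun h => hfix h.symm, v, hv, hfix, rfl⟩)
    simp only [σ, Equiv.trans_apply, finCongr_apply, Fin.val_cast]
    unfold Nat.dist
    omega
  calc _ ≤ (univ.image fun i => Nat.dist (σ (f (σ.symm i))).val i.val).card :=
        inf'_le _ (mem_univ σ)
    _ = (univ.image fun v => Nat.dist (σ (f v)).val (σ v).val).card := by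
        conv_lhs => rw [← image_univ_equiv σ, image_image]
        simp [Function.comp_def]
    _ ≤ 1 + rhoF f + (if ∃ i, f i = i then 1 else 0) :=
        hDcard ▸ card_image_dist_le f (fun v => (σ v).val) D hσ
end
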